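/- Over the field ℂ, the duality maps intertwine the Lie algebra actions: e ∘ τ = τ ∘ f as endomorphisms of Sym^{N−1}E ⊗ ⋀^{N+1}Sym^{d+1}E, and τ' ∘ e = f ∘ τ' as endomorphisms of ⋀^N Sym^d E ⊗ Sym^d E. -/

import Mathlib

open MvPolynomial TensorProduct

set_option maxHeartbeats 1000000
set_option synthInstance.maxHeartbeats 400000

noncomputable section

/-- `Sym' F c` : the `c`-th symmetric power of `E = F²`, realised as the space of
homogeneous polynomials of degree `c` in the two variables `X = X 0`, `Y = X 1`. -/
abbrev Sym' (F : Type*) [Field F] (c : ℕ) : Type _ :=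
  ↥(MvPolynomial.homogeneousSubmodule (Fin 2) F c)

variable (F : Type*) [Field F]

/-- The basis monomial `X^(c-i) Y^i` of `Sym' F c`; it is `0` (junk) if `i > c`. -/
def XY (c i : ℕ) : Sym' F c :=
  if h : i ≤ c then
    ⟨(X 0 : MvPolynomial (Fin 2) F) ^ (c - i) * X 1 ^ i, by
      rw [MvPolynomial.mem_homogeneousSubmodule]
      have := ((isHomogeneous_X_pow (R := F) (0 : Fin 2) (c - i)).mul
        (isHomogeneous_X_pow (R := F) (1 : Fin 2) i))
      rwa [Nat.sub_add_cancel h] at this⟩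
  else 0

/-- `F_∧^{(c)}(k) = X^{c-k₁}Y^{k₁} ∧ ⋯ ∧ X^{c-k_r}Y^{k_r}` in `⋀^r (Sym' F c)`. -/
def wedge (c : ℕ) {r : ℕ} (k : Fin r → ℕ) : ⋀[F]^r (Sym' F c) :=
  ⟨ExteriorAlgebra.ιMulti F r fun a => XY F c (k a),
    ExteriorAlgebra.ιMulti_range F r (Set.mem_range_self _)⟩

/-- `F(i,j) = F_∧^{(d)}(i) ⊗ X^{d-j}Y^j`. -/
def Fp (d : ℕ) {N : ℕ} (i : Fin N → ℕ) (j : ℕ) :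
    (⋀[F]^N (Sym' F d)) ⊗[F] (Sym' F d) :=
  wedge F d i ⊗ₜ[F] XY F d j

/-- The multiplication map `μ_N : ⋀^N V ⊗ V → ⋀^{N+1} V` for `V = Sym' F c`. -/
def mu (c N : ℕ) :
    ((⋀[F]^N (Sym' F c)) ⊗[F] (Sym' F c)) →ₗ[F] ⋀[F]^(N + 1) (Sym' F c) :=
  TensorProduct.lift
    (LinearMap.mk₂ F
      (fun w v => ⟨(w : ExteriorAlgebra F (Sym' F c)) * ExteriorAlgebra.ι F v, by
        have h := Submodule.mul_mem_mul w.2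
          (LinearMap.mem_range_self (ExteriorAlgebra.ι F (M := Sym' F c)) v)
        rwa [← pow_succ] at h⟩)
      (fun w w' v => by ext; simp [add_mul])
      (fun a w v => by ext; simp [mul_assoc, Algebra.smul_mul_assoc])
      (fun w v v' => by ext; simp [mul_add])
      (fun a w v => by ext; simp [Algebra.mul_smul_comm]))

/-- The box `B(k) = [k₁,k₂) × ⋯ × [k_N, k_{N+1})` as a finset of multi-indices. -/
def box {N : ℕ} (k : Fin (N + 1) → ℕ) : Finset (Fin N → ℕ) :=
  Fintype.piFinset fun a : Fin N => Finset.Ico (k a.castSucc) (k a.succ)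

/-- `v_{(s,k)} = Σ_{i ∈ B(k)} F(i, s + |k| - N - |i|)`. -/
def vv (d N : ℕ) (s : ℕ) (k : Fin (N + 1) → ℕ) :
    (⋀[F]^N (Sym' F d)) ⊗[F] (Sym' F d) :=
  ∑ i ∈ box k, Fp F d i (s + (∑ a, k a) - N - ∑ a, i a)

/-- A pair `(i, j)` is semistandard (with entries in `{0,…,d}`). -/
def IsSS (d : ℕ) {N : ℕ} (p : (Fin N → ℕ) × ℕ) : Prop :=
  StrictMono p.1 ∧ (∀ a, p.1 a ≤ d) ∧ p.2 ≤ d ∧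
    ∀ a : Fin N, (a : ℕ) = 0 → p.1 a ≤ p.2

/-- The neighbour map `P`. -/
def Pmap {N : ℕ} (p : (Fin N → ℕ) × ℕ) : (Fin N → ℕ) × ℕ :=
  if h : (Finset.univ.filter fun a : Fin N => p.1 a ≤ p.2).Nonempty then
    let α := (Finset.univ.filter fun a : Fin N => p.1 a ≤ p.2).max' h
    (Function.update p.1 α p.2, p.1 α)
  else p

/-- `F_Δ(i,j)`. -/
def FDelta (d : ℕ) {N : ℕ} (p : (Fin N → ℕ) × ℕ) :
    (⋀[F]^N (Sym' F d)) ⊗[F] (Sym' F d) :=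
  if ∃ a, p.1 a = p.2 then Fp F d p.1 p.2
  else Fp F d p.1 p.2 + Fp F d (Pmap p).1 (Pmap p).2

/-- The content multiset of a pair. -/
def ssContent {N : ℕ} (p : (Fin N → ℕ) × ℕ) : Multiset ℕ :=
  p.2 ::ₘ Finset.univ.val.map p.1

abbrev Dom (N d : ℕ) : Type _ := (Sym' F (N - 1)) ⊗[F] ↥(⋀[F]^(N + 1) (Sym' F (d + 1)))

/-- The codomain `⋀^N Sym^d E ⊗ Sym^d E` of `φ`. -/
abbrev Cod (N d : ℕ) : Type _ := ↥(⋀[F]^N (Sym' F d)) ⊗[F] (Sym' F d)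

/-! The two identities are checked on the spanning vectors `X^{c-j}Y^j ⊗ F_∧(i)` (resp.
`F_∧(i) ⊗ X^{m-l}Y^l`). The reflection `k ↦ c - k` of an index turns the coefficient `c - k` of
`f` into the coefficient of `e` at the reflected index, summand by summand. A summand whose
index would leave `{0, …, c}` has coefficient `0` on both sides, so the formulas for `e`, `f`,
`τ`, `τ'` on in-range indices suffice. -/

theorem TensorProduct.ext_of_span_eq_top {R M N P : Type*} [CommSemiring R]
    [AddCommMonoid M] [AddCommMonoid N] [AddCommMonoid P] [Module R M] [Module R N] [Module R P]
    {s : Set M} {t : Set N} (hs : Submodule.span R s = ⊤) (ht : Submodule.span R t = ⊤)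
    {f g : M ⊗[R] N →ₗ[R] P} (h : ∀ m ∈ s, ∀ n ∈ t, f (m ⊗ₜ n) = g (m ⊗ₜ n)) : f = g :=
  TensorProduct.ext <| LinearMap.ext_on hs fun m hm => LinearMap.ext_on ht fun n hn => h m hm n hn

theorem natCast_smul_congr {R M : Type*} [Semiring R] [AddCommMonoid M] [Module R M] {k : ℕ}
    {x y : M} (h : k ≠ 0 → x = y) : (k : R) • x = (k : R) • y := by
  rcases eq_or_ne k 0 with rfl | hk
  · simp
  · rw [h hk]

theorem update_reflect {ι : Type*} [DecidableEq ι] (n : ℕ) (i : ι → ℕ) (α : ι) (v : ℕ) :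
    (fun a => n - Function.update i α v a) = Function.update (fun a => n - i a) α (n - v) :=
  Function.comp_update (n - ·) i α v

theorem update_le_of_le {ι : Type*} [DecidableEq ι] {n : ℕ} {i : ι → ℕ} (hi : ∀ a, i a ≤ n)
    (α : ι) {v : ℕ} (hv : v ≤ n) (a : ι) : Function.update i α v a ≤ n :=
  (Function.forall_update_iff i fun _ y => y ≤ n).2 ⟨hv, fun b _ => hi b⟩ a

theorem coe_XY {c j : ℕ} (hj : j ≤ c) :
    (XY F c j : MvPolynomial (Fin 2) F) =
      monomial (Finsupp.single 0 (c - j) + Finsupp.single 1 j) 1 := by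
  simp only [XY, dif_pos hj]
  rw [X_pow_eq_monomial, X_pow_eq_monomial, monomial_mul, one_mul]

theorem span_XY_eq_top (c : ℕ) : Submodule.span F (XY F c '' Set.Iic c) = ⊤ := by
  apply Submodule.map_injective_of_injective (Submodule.injective_subtype _)
  rw [Submodule.map_span, Submodule.map_top, Submodule.range_subtype, Set.image_image]
  refine Eq.trans ?_ (homogeneousSubmodule_eq_finsupp_supported _ _ c).symm
  rw [AddMonoidAlgebra.supported_eq_span_single]
  congr 1
  ext p
  simp only [Set.mem_image, Set.mem_Iic, Set.mem_ofPred_eq, Submodule.coe_subtype]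
  constructor
  · rintro ⟨j, hj, rfl⟩
    refine ⟨_, ?_, (coe_XY F hj).symm⟩
    rw [map_add, Finsupp.degree_single, Finsupp.degree_single]
    omega
  · rintro ⟨m, hm, rfl⟩
    have hdeg : m 0 + m 1 = c := by
      rw [← hm, Finsupp.degree_eq_sum, Fin.sum_univ_two]
    have hm' : Finsupp.single 0 (c - m 1) + Finsupp.single 1 (m 1) = m := by
      ext a
      fin_cases a <;> simp; omega
    refine ⟨m 1, by omega, ?_⟩
    rw [coe_XY F (by omega), hm']
    rfl

theorem span_wedge_eq_top (c r : ℕ) :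
    Submodule.span F (wedge F c '' {k : Fin r → ℕ | ∀ a, k a ≤ c}) = ⊤ := by
  have h := exteriorPower.ιMulti_span_of_span F r _ (span_XY_eq_top F c)
  refine top_le_iff.mp (h.symm.trans_le (Submodule.span_mono ?_))
  rintro _ ⟨v, hv, rfl⟩
  choose k hk hkv using fun a => hv (Set.mem_range_self a)
  exact ⟨k, hk, congrArg (exteriorPower.ιMulti F r) (_root_.funext hkv)⟩

variable {F}

theorem XY_lower_reflect {c : ℕ} {e : Sym' F c →ₗ[F] Sym' F c}
    (he : ∀ s ≤ c, e (XY F c s) = (s : F) • XY F c (s - 1)) (j : ℕ) :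
    e (XY F c (c - j)) = ((c - j : ℕ) : F) • XY F c (c - (j + 1)) := by
  rw [he _ (Nat.sub_le c j), Nat.sub_sub]

theorem XY_raise_reflect {c : ℕ} {f : Sym' F c →ₗ[F] Sym' F c}
    (hf : ∀ s ≤ c, f (XY F c s) = ((c - s : ℕ) : F) • XY F c (s + 1)) {j : ℕ} (hj : j ≤ c) :
    f (XY F c (c - j)) = (j : F) • XY F c (c - (j - 1)) := by
  rw [hf _ (Nat.sub_le c j), Nat.sub_sub_self hj]
  exact natCast_smul_congr fun hj0 => by congr 1; omega

theorem wedge_lower_reflect {n r : ℕ} {e : ⋀[F]^r (Sym' F n) →ₗ[F] ⋀[F]^r (Sym' F n)}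
    (he : ∀ k : Fin r → ℕ, (∀ a, k a ≤ n) →
      e (wedge F n k) = ∑ α, (k α : F) • wedge F n (Function.update k α (k α - 1)))
    {i : Fin r → ℕ} :
    e (wedge F n fun a => n - i a) =
      ∑ α, ((n - i α : ℕ) : F) • wedge F n fun a => n - Function.update i α (i α + 1) a := by
  rw [he _ fun a => Nat.sub_le n (i a)]
  simp only [update_reflect, Nat.sub_sub]

theorem wedge_raise_reflect {n r : ℕ} {f : ⋀[F]^r (Sym' F n) →ₗ[F] ⋀[F]^r (Sym' F n)}
    (hf : ∀ k : Fin r → ℕ, (∀ a, k a ≤ n) →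
      f (wedge F n k) = ∑ α, ((n - k α : ℕ) : F) • wedge F n (Function.update k α (k α + 1)))
    {i : Fin r → ℕ} (hi : ∀ a, i a ≤ n) :
    f (wedge F n fun a => n - i a) =
      ∑ α, (i α : F) • wedge F n fun a => n - Function.update i α (i α - 1) a := by
  rw [hf _ fun a => Nat.sub_le n (i a)]
  refine Finset.sum_congr rfl fun α _ => ?_
  rw [Nat.sub_sub_self (hi α), update_reflect]
  have := hi α
  exact natCast_smul_congr fun hα => by rw [show n - i α + 1 = n - (i α - 1) by omega]

theorem sym_tmul_wedge_reflection_intertwines {c n r : ℕ}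
    {eS fS : Sym' F c →ₗ[F] Sym' F c}
    (heS : ∀ s ≤ c, eS (XY F c s) = (s : F) • XY F c (s - 1))
    (hfS : ∀ s ≤ c, fS (XY F c s) = ((c - s : ℕ) : F) • XY F c (s + 1))
    {eW fW : ⋀[F]^r (Sym' F n) →ₗ[F] ⋀[F]^r (Sym' F n)}
    (heW : ∀ k : Fin r → ℕ, (∀ a, k a ≤ n) →
      eW (wedge F n k) = ∑ α, (k α : F) • wedge F n (Function.update k α (k α - 1)))
    (hfW : ∀ k : Fin r → ℕ, (∀ a, k a ≤ n) →
      fW (wedge F n k) = ∑ α, ((n - k α : ℕ) : F) • wedge F n (Function.update k α (k α + 1)))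
    {τ : Sym' F c ⊗[F] ⋀[F]^r (Sym' F n) →ₗ[F] Sym' F c ⊗[F] ⋀[F]^r (Sym' F n)}
    (hτ : ∀ j ≤ c, ∀ i : Fin r → ℕ, (∀ a, i a ≤ n) →
      τ (XY F c j ⊗ₜ[F] wedge F n i) = XY F c (c - j) ⊗ₜ[F] wedge F n (fun a => n - i a)) :
    (TensorProduct.map eS LinearMap.id + TensorProduct.map LinearMap.id eW) ∘ₗ τ =
      τ ∘ₗ (TensorProduct.map fS LinearMap.id + TensorProduct.map LinearMap.id fW) := by
  refine TensorProduct.ext_of_span_eq_top (span_XY_eq_top F c) (span_wedge_eq_top F n r) ?_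
  rintro _ ⟨j, hj, rfl⟩ _ ⟨i, hi, rfl⟩
  have hj : j ≤ c := hj
  simp only [LinearMap.comp_apply, LinearMap.add_apply, map_tmul, LinearMap.id_apply,
    hτ j hj i hi]
  rw [XY_lower_reflect heS, wedge_lower_reflect heW, hfS j hj, hfW i hi]
  simp only [← smul_tmul', tmul_sum, tmul_smul, map_add, map_sum, map_smul]
  congr 1
  · exact natCast_smul_congr fun h => (hτ (j + 1) (by omega) i hi).symm
  · refine Finset.sum_congr rfl fun α _ => natCast_smul_congr fun h => ?_
    exact (hτ j hj _ (update_le_of_le hi α (by omega))).symm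

theorem wedge_tmul_sym_reflection_intertwines {n m r : ℕ}
    {eW fW : ⋀[F]^r (Sym' F n) →ₗ[F] ⋀[F]^r (Sym' F n)}
    (heW : ∀ k : Fin r → ℕ, (∀ a, k a ≤ n) →
      eW (wedge F n k) = ∑ α, (k α : F) • wedge F n (Function.update k α (k α - 1)))
    (hfW : ∀ k : Fin r → ℕ, (∀ a, k a ≤ n) →
      fW (wedge F n k) = ∑ α, ((n - k α : ℕ) : F) • wedge F n (Function.update k α (k α + 1)))
    {eS fS : Sym' F m →ₗ[F] Sym' F m}
    (heS : ∀ s ≤ m, eS (XY F m s) = (s : F) • XY F m (s - 1))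
    (hfS : ∀ s ≤ m, fS (XY F m s) = ((m - s : ℕ) : F) • XY F m (s + 1))
    {τ : ⋀[F]^r (Sym' F n) ⊗[F] Sym' F m →ₗ[F] ⋀[F]^r (Sym' F n) ⊗[F] Sym' F m}
    (hτ : ∀ i : Fin r → ℕ, (∀ a, i a ≤ n) → ∀ l ≤ m,
      τ (wedge F n i ⊗ₜ[F] XY F m l) = wedge F n (fun a => n - i a) ⊗ₜ[F] XY F m (m - l)) :
    τ ∘ₗ (TensorProduct.map eW LinearMap.id + TensorProduct.map LinearMap.id eS) =
      (TensorProduct.map fW LinearMap.id + TensorProduct.map LinearMap.id fS) ∘ₗ τ := by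
  refine TensorProduct.ext_of_span_eq_top (span_wedge_eq_top F n r) (span_XY_eq_top F m) ?_
  rintro _ ⟨i, hi, rfl⟩ _ ⟨l, hl, rfl⟩
  have hl : l ≤ m := hl
  simp only [LinearMap.comp_apply, LinearMap.add_apply, map_tmul, LinearMap.id_apply,
    hτ i hi l hl]
  rw [wedge_raise_reflect hfW hi, XY_raise_reflect hfS hl, heW i hi, heS l hl]
  simp only [← smul_tmul', sum_tmul, tmul_smul, map_add, map_sum, map_smul]
  congr 1
  · refine Finset.sum_congr rfl fun α _ => natCast_smul_congr fun h => ?_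
    exact hτ _ (update_le_of_le hi α (by have := hi α; omega)) l hl
  · exact natCast_smul_congr fun h => hτ i hi (l - 1) (by omega)

theorem statement11_general (N d : ℕ)
    (eS fS : Sym' ℂ (N - 1) →ₗ[ℂ] Sym' ℂ (N - 1))
    (heS : ∀ s ≤ N - 1, eS (XY ℂ (N - 1) s) = (s : ℂ) • XY ℂ (N - 1) (s - 1))
    (hfS : ∀ s ≤ N - 1, fS (XY ℂ (N - 1) s) = ((N - 1 - s : ℕ) : ℂ) • XY ℂ (N - 1) (s + 1))
    (eW fW : ↥(⋀[ℂ]^(N + 1) (Sym' ℂ (d + 1))) →ₗ[ℂ] ↥(⋀[ℂ]^(N + 1) (Sym' ℂ (d + 1))))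
    (heW : ∀ k : Fin (N + 1) → ℕ, (∀ a, k a ≤ d + 1) →
      eW (wedge ℂ (d + 1) k) =
        ∑ α, (k α : ℂ) • wedge ℂ (d + 1) (Function.update k α (k α - 1)))
    (hfW : ∀ k : Fin (N + 1) → ℕ, (∀ a, k a ≤ d + 1) →
      fW (wedge ℂ (d + 1) k) =
        ∑ α, ((d + 1 - k α : ℕ) : ℂ) • wedge ℂ (d + 1) (Function.update k α (k α + 1)))
    (eV fV : ↥(⋀[ℂ]^N (Sym' ℂ d)) →ₗ[ℂ] ↥(⋀[ℂ]^N (Sym' ℂ d)))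
    (heV : ∀ k : Fin N → ℕ, (∀ a, k a ≤ d) →
      eV (wedge ℂ d k) = ∑ α, (k α : ℂ) • wedge ℂ d (Function.update k α (k α - 1)))
    (hfV : ∀ k : Fin N → ℕ, (∀ a, k a ≤ d) →
      fV (wedge ℂ d k) = ∑ α, ((d - k α : ℕ) : ℂ) • wedge ℂ d (Function.update k α (k α + 1)))
    (eSd fSd : Sym' ℂ d →ₗ[ℂ] Sym' ℂ d)
    (heSd : ∀ j ≤ d, eSd (XY ℂ d j) = (j : ℂ) • XY ℂ d (j - 1))
    (hfSd : ∀ j ≤ d, fSd (XY ℂ d j) = ((d - j : ℕ) : ℂ) • XY ℂ d (j + 1))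
    (τ : Dom ℂ N d →ₗ[ℂ] Dom ℂ N d)
    (hτ : ∀ j ≤ N - 1, ∀ i : Fin (N + 1) → ℕ, (∀ a, i a ≤ d + 1) →
      τ (XY ℂ (N - 1) j ⊗ₜ[ℂ] wedge ℂ (d + 1) i) =
        XY ℂ (N - 1) (N - 1 - j) ⊗ₜ[ℂ] wedge ℂ (d + 1) (fun a => d + 1 - i a))
    (τ' : Cod ℂ N d →ₗ[ℂ] Cod ℂ N d)
    (hτ' : ∀ j : Fin N → ℕ, (∀ a, j a ≤ d) → ∀ l ≤ d,
      τ' (wedge ℂ d j ⊗ₜ[ℂ] XY ℂ d l) =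
        wedge ℂ d (fun a => d - j a) ⊗ₜ[ℂ] XY ℂ d (d - l)) :
    (∀ x : Dom ℂ N d,
      ((TensorProduct.map eS LinearMap.id + TensorProduct.map LinearMap.id eW :
          Dom ℂ N d →ₗ[ℂ] Dom ℂ N d)) (τ x) =
        τ (((TensorProduct.map fS LinearMap.id + TensorProduct.map LinearMap.id fW :
          Dom ℂ N d →ₗ[ℂ] Dom ℂ N d)) x)) ∧
    (∀ y : Cod ℂ N d,
      τ' (((TensorProduct.map eV LinearMap.id + TensorProduct.map LinearMap.id eSd :
          Cod ℂ N d →ₗ[ℂ] Cod ℂ N d)) y) =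
        ((TensorProduct.map fV LinearMap.id + TensorProduct.map LinearMap.id fSd :
          Cod ℂ N d →ₗ[ℂ] Cod ℂ N d)) (τ' y)) :=
  ⟨LinearMap.congr_fun (sym_tmul_wedge_reflection_intertwines heS hfS heW hfW hτ),
    LinearMap.congr_fun (wedge_tmul_sym_reflection_intertwines heV hfV heSd hfSd hτ')⟩

/-- Lemma 2.10 of the paper, first two equations. Over `ℂ`, the duality maps
`τ` (on `Sym^{N-1} E ⊗ ⋀^{N+1} Sym^{d+1} E`) and `τ'` (on `⋀^N Sym^d E ⊗ Sym^d E`) intertwine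
the Lie algebra actions: `e ∘ τ = τ ∘ f` and `τ' ∘ e = f ∘ τ'`. -/
theorem statement11 (N d : ℕ) (hN : 0 < N)
    (eS fS : Sym' ℂ (N - 1) →ₗ[ℂ] Sym' ℂ (N - 1))
    (heS : ∀ s ≤ N - 1, eS (XY ℂ (N - 1) s) = (s : ℂ) • XY ℂ (N - 1) (s - 1))
    (hfS : ∀ s ≤ N - 1, fS (XY ℂ (N - 1) s) = ((N - 1 - s : ℕ) : ℂ) • XY ℂ (N - 1) (s + 1))
    (eW fW : ↥(⋀[ℂ]^(N + 1) (Sym' ℂ (d + 1))) →ₗ[ℂ] ↥(⋀[ℂ]^(N + 1) (Sym' ℂ (d + 1))))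
    (heW : ∀ k : Fin (N + 1) → ℕ, (∀ a, k a ≤ d + 1) →
      eW (wedge ℂ (d + 1) k) =
        ∑ α, (k α : ℂ) • wedge ℂ (d + 1) (Function.update k α (k α - 1)))
    (hfW : ∀ k : Fin (N + 1) → ℕ, (∀ a, k a ≤ d + 1) →
      fW (wedge ℂ (d + 1) k) =
        ∑ α, ((d + 1 - k α : ℕ) : ℂ) • wedge ℂ (d + 1) (Function.update k α (k α + 1)))
    (eV fV : ↥(⋀[ℂ]^N (Sym' ℂ d)) →ₗ[ℂ] ↥(⋀[ℂ]^N (Sym' ℂ d)))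
    (heV : ∀ k : Fin N → ℕ, (∀ a, k a ≤ d) →
      eV (wedge ℂ d k) = ∑ α, (k α : ℂ) • wedge ℂ d (Function.update k α (k α - 1)))
    (hfV : ∀ k : Fin N → ℕ, (∀ a, k a ≤ d) →
      fV (wedge ℂ d k) = ∑ α, ((d - k α : ℕ) : ℂ) • wedge ℂ d (Function.update k α (k α + 1)))
    (eSd fSd : Sym' ℂ d →ₗ[ℂ] Sym' ℂ d)
    (heSd : ∀ j ≤ d, eSd (XY ℂ d j) = (j : ℂ) • XY ℂ d (j - 1))
    (hfSd : ∀ j ≤ d, fSd (XY ℂ d j) = ((d - j : ℕ) : ℂ) • XY ℂ d (j + 1))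
    (τ : Dom ℂ N d →ₗ[ℂ] Dom ℂ N d)
    (hτ : ∀ j ≤ N - 1, ∀ i : Fin (N + 1) → ℕ, (∀ a, i a ≤ d + 1) →
      τ (XY ℂ (N - 1) j ⊗ₜ[ℂ] wedge ℂ (d + 1) i) =
        XY ℂ (N - 1) (N - 1 - j) ⊗ₜ[ℂ] wedge ℂ (d + 1) (fun a => d + 1 - i a))
    (τ' : Cod ℂ N d →ₗ[ℂ] Cod ℂ N d)
    (hτ' : ∀ j : Fin N → ℕ, (∀ a, j a ≤ d) → ∀ l ≤ d,
      τ' (wedge ℂ d j ⊗ₜ[ℂ] XY ℂ d l) =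
        wedge ℂ d (fun a => d - j a) ⊗ₜ[ℂ] XY ℂ d (d - l)) :
    (∀ x : Dom ℂ N d,
      ((TensorProduct.map eS LinearMap.id + TensorProduct.map LinearMap.id eW :
          Dom ℂ N d →ₗ[ℂ] Dom ℂ N d)) (τ x) =
        τ (((TensorProduct.map fS LinearMap.id + TensorProduct.map LinearMap.id fW :
          Dom ℂ N d →ₗ[ℂ] Dom ℂ N d)) x)) ∧
    (∀ y : Cod ℂ N d,
      τ' (((TensorProduct.map eV LinearMap.id + TensorProduct.map LinearMap.id eSd :
          Cod ℂ N d →ₗ[ℂ] Cod ℂ N d)) y) =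
        ((TensorProduct.map fV LinearMap.id + TensorProduct.map LinearMap.id fSd :
          Cod ℂ N d →ₗ[ℂ] Cod ℂ N d)) (τ' y)) :=
  statement11_general N d eS fS heS hfS eW fW heW hfW eV fV heV hfV eSd fSd heSd hfSd τ hτ τ' hτ'
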